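/- (Convergence of federated LoRA with factor-wise averaging, deterministic version with explicit constants.) Let N, T be positive integers, η > 0, and W₀ ∈ ℝ^{d×d}. For i = 1,…,N let f_i : ℝ^{d×d} → ℝ be differentiable with ‖∇f_i(X)‖_F ≤ G_W for all X, and let f = (1/N)∑_i f_i be L-smooth with f(X) ≥ f* for all X. Define sequences by: W^t = W₀ + B̄^t Ā^t; per-client factor gradients G_{A,i}^t = (B̄^t)ᵀ∇f_i(W^t) and G_{B,i}^t = ∇f_i(W^t)(Ā^t)ᵀ; aggregated updates Ā^{t+1} = Ā^t − η·(1/N)∑_i G_{A,i}^t and B̄^{t+1} = B̄^t − η·(1/N)∑_i G_{B,i}^t; and aggregation error E^{t+1} = B̄^{t+1}Ā^{t+1} − (1/N)∑_i (B̄^t − ηG_{B,i}^t)(Ā^t − ηG_{A,i}^t). Assume ‖B̄^t‖_F ≤ √τ and ‖Ā^t‖_F ≤ √τ for all t ∈ {0,…,T}, and set G_A = √τ G_W and G_B = √τ G_W. Then, writing ∇_A f(W^t) = (B̄^t)ᵀ∇f(W^t) and ∇_B f(W^t) = ∇f(W^t)(Ā^t)ᵀ, the following stationarity bound holds: min_{0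 ≤ t ≤ T−1} ( ‖∇_A f(W^t)‖_F² + ‖∇_B f(W^t)‖_F² ) ≤ (f(W⁰) − f*)/(Tη) + ((3Lη² + 2)/(2Tη)) ∑_{t=0}^{T−1} ‖E^{t+1}‖_F²/η² + η( G_W² + G_W G_A G_B + 2Lτ(G_A + G_B)² ) + 2η³ L G_A² G_B². -/

import Mathlib

open scoped BigOperators
open Matrix

noncomputable def frob {m n : Type*} [Fintype m] [Fintype n] (M : Matrix m n ℝ) : ℝ :=
  Real.sqrt (∑ i, ∑ j, (M i j) ^ 2)

noncomputable def frobInner {m n : Type*} [Fintype m] [Fintype n] (X Y : Matrix m n ℝ) : ℝ :=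
  Matrix.trace (Xᵀ * Y)

/-!
By the definition of `E`, the product `B̄^{t+1} Ā^{t+1}` is the average of the clients' products
plus `E^{t+1}`. Expanding that average, `W` moves by `-η (B̄ B̄ᵀ ∇f + ∇f Āᵀ Ā)` up to the
second-order term `η² (1/N) ∑ᵢ G_{B,i} G_{A,i}` and the error `E^{t+1}`, and
`⟨∇f, B̄ B̄ᵀ ∇f + ∇f Āᵀ Ā⟩ = ‖∇_A f‖² + ‖∇_B f‖²`. So `L`-smoothness gives a descent inequality
for every step (Young's inequality absorbs the cross term with `E`); summing over `t`
telescopes `f`, and the minimum is at most the average.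
-/

open Finset

section Frobenius

attribute [local instance] Matrix.frobeniusSeminormedAddCommGroup Matrix.frobeniusNormedSpace

variable {m n p : Type*} [Fintype m] [Fintype n] [Fintype p]

lemma frob_eq_norm (M : Matrix m n ℝ) : frob M = ‖M‖ := by
  rw [Matrix.frobenius_norm_def, frob, Real.sqrt_eq_rpow]
  simp only [Real.rpow_two, Real.norm_eq_abs, sq_abs]

lemma frob_nonneg (M : Matrix m n ℝ) : 0 ≤ frob M := Real.sqrt_nonneg _

lemma frob_add_le (X Y : Matrix m n ℝ) : frob (X + Y) ≤ frob X + frob Y := by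
  simpa only [frob_eq_norm] using norm_add_le X Y

lemma frob_sub_le (X Y : Matrix m n ℝ) : frob (X - Y) ≤ frob X + frob Y := by
  simpa only [frob_eq_norm] using norm_sub_le X Y

lemma frob_smul (c : ℝ) (X : Matrix m n ℝ) : frob (c • X) = |c| * frob X := by
  simp only [frob_eq_norm, norm_smul, Real.norm_eq_abs]

lemma frob_mul_le (X : Matrix m n ℝ) (Y : Matrix n p ℝ) : frob (X * Y) ≤ frob X * frob Y := by
  simpa only [frob_eq_norm] using Matrix.frobenius_norm_mul X Y

lemma frob_mul_le_of_le {X : Matrix m n ℝ} {Y : Matrix n p ℝ} {a b : ℝ} (hX : frob X ≤ a)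
    (hY : frob Y ≤ b) : frob (X * Y) ≤ a * b :=
  (frob_mul_le X Y).trans (mul_le_mul hX hY (frob_nonneg _) ((frob_nonneg _).trans hX))

lemma frob_transpose (X : Matrix m n ℝ) : frob Xᵀ = frob X := by
  simpa only [frob_eq_norm] using Matrix.frobenius_norm_transpose X

lemma frob_average_le {N : ℕ} (hN : 0 < N) {v : Fin N → Matrix m n ℝ} {C : ℝ}
    (hv : ∀ i, frob (v i) ≤ C) : frob ((N : ℝ)⁻¹ • ∑ i, v i) ≤ C := by
  have hN' : (0 : ℝ) < N := Nat.cast_pos.mpr hN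
  simp only [frob_eq_norm] at hv ⊢
  calc ‖(N : ℝ)⁻¹ • ∑ i, v i‖ ≤ (N : ℝ)⁻¹ * ∑ i, ‖v i‖ := by
        rw [norm_smul, Real.norm_of_nonneg (inv_nonneg.mpr hN'.le)]
        gcongr
        exact norm_sum_le _ _
    _ ≤ (N : ℝ)⁻¹ * (N * C) := by
        gcongr
        simpa using sum_le_card_nsmul univ (fun i => ‖v i‖) C fun i _ => hv i
    _ = C := by field_simp

end Frobenius

section FrobeniusInner

variable {m n p : Type*} [Fintype m] [Fintype n] [Fintype p]

lemma frobInner_eq_sum (X Y : Matrix m n ℝ) :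
    frobInner X Y = ∑ i, ∑ j, X i j * Y i j := by
  simp only [frobInner, Matrix.trace, Matrix.diag, Matrix.mul_apply, Matrix.transpose_apply]
  exact sum_comm

lemma frobInner_self (X : Matrix m n ℝ) : frobInner X X = frob X ^ 2 := by
  rw [frobInner_eq_sum, frob, Real.sq_sqrt (by positivity)]
  simp only [sq]

lemma frobInner_le (X Y : Matrix m n ℝ) : frobInner X Y ≤ frob X * frob Y := by
  simp only [frobInner_eq_sum, frob, ← Fintype.sum_prod_type']
  exact Real.sum_mul_le_sqrt_mul_sqrt _ _ _

lemma frobInner_add_right (X Y Z : Matrix m n ℝ) :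
    frobInner X (Y + Z) = frobInner X Y + frobInner X Z := by
  simp only [frobInner, Matrix.mul_add, Matrix.trace_add]

lemma frobInner_sub_right (X Y Z : Matrix m n ℝ) :
    frobInner X (Y - Z) = frobInner X Y - frobInner X Z := by
  simp only [frobInner, Matrix.mul_sub, Matrix.trace_sub]

lemma frobInner_smul_right (c : ℝ) (X Y : Matrix m n ℝ) :
    frobInner X (c • Y) = c * frobInner X Y := by
  simp only [frobInner, Matrix.mul_smul, Matrix.trace_smul, smul_eq_mul]

lemma frobInner_mul_right (X : Matrix m n ℝ) (Y : Matrix m p ℝ) (Z : Matrix p n ℝ) :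
    frobInner X (Y * Z) = frobInner (X * Zᵀ) Y := by
  simp only [frobInner, Matrix.transpose_mul, Matrix.transpose_transpose]
  rw [← Matrix.mul_assoc, Matrix.trace_mul_comm, ← Matrix.mul_assoc, Matrix.mul_assoc]

lemma frobInner_mul_left (X : Matrix m n ℝ) (Y : Matrix m p ℝ) (Z : Matrix p n ℝ) :
    frobInner X (Y * Z) = frobInner (Yᵀ * X) Z := by
  simp only [frobInner, Matrix.transpose_mul, Matrix.transpose_transpose, Matrix.mul_assoc]

end FrobeniusInner

lemma sq_add_add_le_three_mul (x y z : ℝ) : (x + y + z) ^ 2 ≤ 3 * (x ^ 2 + y ^ 2 + z ^ 2) := by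
  nlinarith [sq_nonneg (x - y), sq_nonneg (y - z), sq_nonneg (x - z)]

section Descent

variable {m n : Type*} [Fintype m] [Fintype n]

lemma descent_step_of_smooth {f : Matrix m n ℝ → ℝ} {gf : Matrix m n ℝ → Matrix m n ℝ} {L : ℝ}
    (hsmooth : ∀ X Y, f Y ≤ f X + frobInner (gf X) (Y - X) + L / 2 * frob (Y - X) ^ 2)
    (hL : 0 ≤ L) {η GW a b : ℝ} (hη : 0 < η) {X Y E D M : Matrix m n ℝ}
    (hYX : Y - X = E - η • D + η ^ 2 • M)
    (hG : frob (gf X) ≤ GW) (hD : frob D ≤ a) (hM : frob M ≤ b) :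
    η * frobInner (gf X) D ≤ f X - f Y
      + η ^ 2 * (GW ^ 2 / 2 + GW * b + 3 * L / 2 * a ^ 2 + 3 * L / 2 * η ^ 2 * b ^ 2)
      + (1 / (2 * η ^ 2) + 3 * L / 2) * frob E ^ 2 := by
  have hGW : 0 ≤ GW := (frob_nonneg _).trans hG
  have hinner : frobInner (gf X) (Y - X)
      = frobInner (gf X) E - η * frobInner (gf X) D + η ^ 2 * frobInner (gf X) M := by
    rw [hYX, frobInner_add_right, frobInner_sub_right, frobInner_smul_right,
      frobInner_smul_right]
  have hE : frobInner (gf X) E ≤ η ^ 2 * GW ^ 2 / 2 + frob E ^ 2 / (2 * η ^ 2) := by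
    calc frobInner (gf X) E ≤ GW * frob E :=
          (frobInner_le _ _).trans (mul_le_mul_of_nonneg_right hG (frob_nonneg _))
      _ = (η * GW) * (frob E / η) := by field_simp
      _ ≤ ((η * GW) ^ 2 + (frob E / η) ^ 2) / 2 := by
          linarith [two_mul_le_add_sq (η * GW) (frob E / η)]
      _ = η ^ 2 * GW ^ 2 / 2 + frob E ^ 2 / (2 * η ^ 2) := by field_simp
  have hM' : frobInner (gf X) M ≤ GW * b :=
    (frobInner_le _ _).trans (mul_le_mul hG hM (frob_nonneg _) hGW)
  have hstep : frob (Y - X) ^ 2 ≤ 3 * (frob E ^ 2 + (η * a) ^ 2 + (η ^ 2 * b) ^ 2) := by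
    have hnorm : frob (Y - X) ≤ frob E + η * a + η ^ 2 * b := by
      rw [hYX]
      refine (frob_add_le _ _).trans (add_le_add ((frob_sub_le _ _).trans ?_) ?_)
      · rw [frob_smul, abs_of_pos hη]
        gcongr
      · rw [frob_smul, abs_of_nonneg (sq_nonneg η)]
        gcongr
    exact (pow_le_pow_left₀ (frob_nonneg _) hnorm 2).trans (sq_add_add_le_three_mul _ _ _)
  have hsm := hsmooth X Y
  rw [hinner] at hsm
  have hquad := mul_le_mul_of_nonneg_left hstep (by positivity : 0 ≤ L / 2)
  have hsecond := mul_le_mul_of_nonneg_left hM' (sq_nonneg η)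
  linear_combination hsm + hquad + hsecond + hE

end Descent

section FactorwiseAveraging

variable {m k n : Type*} [Fintype m] [Fintype k] [Fintype n] {N : ℕ}

lemma average_factor_products (hN : 0 < N) (η : ℝ) (B : Matrix m k ℝ) (A : Matrix k n ℝ)
    (G : Fin N → Matrix m n ℝ) :
    (N : ℝ)⁻¹ • ∑ i, (B - η • (G i * Aᵀ)) * (A - η • (Bᵀ * G i))
      = B * A - η • (B * (Bᵀ * ((N : ℝ)⁻¹ • ∑ i, G i)) + ((N : ℝ)⁻¹ • ∑ i, G i) * Aᵀ * A)
        + η ^ 2 • ((N : ℝ)⁻¹ • ∑ i, G i * Aᵀ * (Bᵀ * G i)) := by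
  have hN' : (N : ℝ) ≠ 0 := Nat.cast_ne_zero.mpr hN.ne'
  have hexpand : ∀ i, (B - η • (G i * Aᵀ)) * (A - η • (Bᵀ * G i))
      = B * A - η • (B * (Bᵀ * G i) + G i * Aᵀ * A) + η ^ 2 • (G i * Aᵀ * (Bᵀ * G i)) := by
    intro i
    simp only [Matrix.sub_mul, Matrix.mul_sub, Matrix.smul_mul, Matrix.mul_smul,
      Matrix.mul_assoc]
    module
  simp only [hexpand, sum_add_distrib, sum_sub_distrib, ← smul_sum,
    sum_const, card_univ, Fintype.card_fin, Matrix.mul_smul, Matrix.smul_mul,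
    Matrix.mul_sum, Matrix.sum_mul]
  match_scalars <;> field_simp

lemma factorwise_descent_step (hN : 0 < N) {f : Matrix m n ℝ → ℝ}
    {gf : Matrix m n ℝ → Matrix m n ℝ} {L : ℝ}
    (hsmooth : ∀ X Y, f Y ≤ f X + frobInner (gf X) (Y - X) + L / 2 * frob (Y - X) ^ 2)
    (hL : 0 ≤ L) {η GW s : ℝ} (hη : 0 < η) {X Y E : Matrix m n ℝ} {B : Matrix m k ℝ}
    {A : Matrix k n ℝ} {G : Fin N → Matrix m n ℝ}
    (hgf : gf X = (N : ℝ)⁻¹ • ∑ i, G i) (hG : ∀ i, frob (G i) ≤ GW)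
    (hB : frob B ≤ s) (hA : frob A ≤ s)
    (hYX : Y - X = E + ((N : ℝ)⁻¹ • ∑ i, (B - η • (G i * Aᵀ)) * (A - η • (Bᵀ * G i)) - B * A)) :
    η * (frob (Bᵀ * gf X) ^ 2 + frob (gf X * Aᵀ) ^ 2) ≤ f X - f Y
      + η ^ 2 * (GW ^ 2 / 2 + GW * (s * GW) ^ 2 + 3 * L / 2 * (2 * s ^ 2 * GW) ^ 2
        + 3 * L / 2 * η ^ 2 * ((s * GW) ^ 2) ^ 2)
      + (1 / (2 * η ^ 2) + 3 * L / 2) * frob E ^ 2 := by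
  have hgfGW : frob (gf X) ≤ GW := hgf ▸ frob_average_le hN hG
  have hBt : frob Bᵀ ≤ s := (frob_transpose B).trans_le hB
  have hAt : frob Aᵀ ≤ s := (frob_transpose A).trans_le hA
  have hstep : Y - X = E - η • (B * (Bᵀ * gf X) + gf X * Aᵀ * A)
      + η ^ 2 • ((N : ℝ)⁻¹ • ∑ i, G i * Aᵀ * (Bᵀ * G i)) := by
    rw [hYX, average_factor_products hN, hgf]
    abel
  have hinner : frobInner (gf X) (B * (Bᵀ * gf X) + gf X * Aᵀ * A)
      = frob (Bᵀ * gf X) ^ 2 + frob (gf X * Aᵀ) ^ 2 := by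
    rw [frobInner_add_right, frobInner_mul_left (gf X) B, frobInner_mul_right (gf X) (gf X * Aᵀ),
      frobInner_self, frobInner_self]
  have hdir : frob (B * (Bᵀ * gf X) + gf X * Aᵀ * A) ≤ 2 * s ^ 2 * GW := by
    have h₁ := frob_mul_le_of_le hB (frob_mul_le_of_le hBt hgfGW)
    have h₂ := frob_mul_le_of_le (frob_mul_le_of_le hgfGW hAt) hA
    linarith [frob_add_le (B * (Bᵀ * gf X)) (gf X * Aᵀ * A)]
  have hsecond : frob ((N : ℝ)⁻¹ • ∑ i, G i * Aᵀ * (Bᵀ * G i)) ≤ (s * GW) ^ 2 :=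
    frob_average_le hN fun i => (frob_mul_le_of_le (frob_mul_le_of_le (hG i) hAt)
      (frob_mul_le_of_le hBt (hG i))).trans_eq (by ring)
  rw [← hinner]
  exact descent_step_of_smooth hsmooth hL hη hstep hgfGW hdir hsecond

end FactorwiseAveraging

lemma inf'_range_le_of_descent {T : ℕ} (hT : 0 < T) {η : ℝ} (hη : 0 < η) {s φ c : ℕ → ℝ}
    {φmin : ℝ} (hstep : ∀ t < T, η * s t ≤ φ t - φ (t + 1) + c t) (hmin : φmin ≤ φ T) :
    (range T).inf' (nonempty_range_iff.mpr hT.ne') s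
      ≤ (φ 0 - φmin + ∑ t ∈ range T, c t) / (T * η) := by
  have hTη : (0 : ℝ) < T * η := mul_pos (Nat.cast_pos.mpr hT) hη
  have hmin_le_avg : (T : ℝ) * (range T).inf' (nonempty_range_iff.mpr hT.ne') s
      ≤ ∑ t ∈ range T, s t := by
    simpa using card_nsmul_le_sum (range T) s _ fun t ht => inf'_le s ht
  have htelescope : η * ∑ t ∈ range T, s t ≤ φ 0 - φ T + ∑ t ∈ range T, c t := by
    rw [mul_sum, ← sum_range_sub' φ, ← sum_add_distrib]
    exact sum_le_sum fun t ht => hstep t (mem_range.mp ht)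
  rw [le_div_iff₀ hTη]
  nlinarith

lemma fedlora_constant_le {T η L GW τ P : ℝ} (hT : 0 < T) (hη : 0 < η) (hL : 0 ≤ L)
    (hP : 0 ≤ P) :
    (T * (η ^ 2 * (GW ^ 2 / 2 + GW * (√τ * GW) ^ 2 + 3 * L / 2 * (2 * √τ ^ 2 * GW) ^ 2
        + 3 * L / 2 * η ^ 2 * ((√τ * GW) ^ 2) ^ 2)) + (1 / (2 * η ^ 2) + 3 * L / 2) * P)
        / (T * η)
      ≤ (3 * L * η ^ 2 + 2) / (2 * T * η) * (P / η ^ 2)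
        + η * (GW ^ 2 + GW * (√τ * GW) * (√τ * GW) + 2 * L * τ * (√τ * GW + √τ * GW) ^ 2)
        + 2 * η ^ 3 * L * (√τ * GW) ^ 2 * (√τ * GW) ^ 2 := by
  -- `√τ ^ 4 = τ * √τ ^ 2` also when `τ < 0`, since then `√τ = 0`
  have hτ : (2 * √τ ^ 2 * GW) ^ 2 = τ * (√τ * GW + √τ * GW) ^ 2 := by
    have : √τ ^ 2 * √τ ^ 2 = τ * √τ ^ 2 := by
      rw [Real.sq_sqrt']
      rcases le_total τ 0 with h | h <;> simp [h]
    linear_combination 4 * GW ^ 2 * this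
  have hsplit : ∀ C Q : ℝ, (T * (η ^ 2 * C) + Q * P) / (T * η) = η * C + Q * P / (T * η) := by
    intro C Q
    field_simp
  have herror : (1 / (2 * η ^ 2) + 3 * L / 2) * P / (T * η)
      ≤ (3 * L * η ^ 2 + 2) / (2 * T * η) * (P / η ^ 2) := by
    have hgap : (3 * L * η ^ 2 + 2) / (2 * T * η) * (P / η ^ 2)
        - (1 / (2 * η ^ 2) + 3 * L / 2) * P / (T * η) = P / (2 * T * η ^ 3) := by
      field_simp
      ring
    linarith [div_nonneg hP (by positivity : (0 : ℝ) ≤ 2 * T * η ^ 3)]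
  have hτ_nonneg : 0 ≤ τ * (√τ * GW + √τ * GW) ^ 2 := hτ ▸ sq_nonneg _
  have hconst : GW ^ 2 / 2 + GW * (√τ * GW) ^ 2 + 3 * L / 2 * (τ * (√τ * GW + √τ * GW) ^ 2)
        + 3 * L / 2 * η ^ 2 * ((√τ * GW) ^ 2) ^ 2
      ≤ GW ^ 2 + GW * (√τ * GW) * (√τ * GW) + 2 * L * τ * (√τ * GW + √τ * GW) ^ 2
        + 2 * η ^ 2 * L * (√τ * GW) ^ 2 * (√τ * GW) ^ 2 := by
    nlinarith [mul_nonneg hL hτ_nonneg, sq_nonneg GW,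
      mul_nonneg (mul_nonneg hL (sq_nonneg η)) (sq_nonneg ((√τ * GW) ^ 2))]
  rw [hsplit, hτ]
  nlinarith [mul_le_mul_of_nonneg_left hconst hη.le]

theorem fedlora_factorwise_convergence_general (N T d r : ℕ) (hN : 0 < N) (hT : 0 < T)
    (η : ℝ) (hη : 0 < η)
    (f : Matrix (Fin d) (Fin d) ℝ → ℝ)
    (g : Fin N → Matrix (Fin d) (Fin d) ℝ → Matrix (Fin d) (Fin d) ℝ)
    (gf : Matrix (Fin d) (Fin d) ℝ → Matrix (Fin d) (Fin d) ℝ)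
    (L GW τ fstar : ℝ) (hL : 0 ≤ L)
    (hgf : ∀ X, gf X = (N : ℝ)⁻¹ • ∑ i, g i X)
    (hgradi : ∀ i X, frob (g i X) ≤ GW)
    (hsmooth : ∀ X Y, f Y ≤ f X + frobInner (gf X) (Y - X) + L / 2 * frob (Y - X) ^ 2)
    (hfstar : ∀ X, fstar ≤ f X)
    (W₀ : Matrix (Fin d) (Fin d) ℝ)
    (Bbar : ℕ → Matrix (Fin d) (Fin r) ℝ) (Abar : ℕ → Matrix (Fin r) (Fin d) ℝ)
    (W : ℕ → Matrix (Fin d) (Fin d) ℝ) (E : ℕ → Matrix (Fin d) (Fin d) ℝ)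
    (hW : ∀ t, W t = W₀ + Bbar t * Abar t)
    (hE : ∀ t, E (t + 1) = Bbar (t + 1) * Abar (t + 1)
      - (N : ℝ)⁻¹ • ∑ i,
          (Bbar t - η • (g i (W t) * (Abar t)ᵀ)) * (Abar t - η • ((Bbar t)ᵀ * g i (W t))))
    (hBnorm : ∀ t ≤ T, frob (Bbar t) ≤ Real.sqrt τ)
    (hAnorm : ∀ t ≤ T, frob (Abar t) ≤ Real.sqrt τ) :
    (Finset.range T).inf' (Finset.nonempty_range_iff.mpr hT.ne')
        (fun t => frob ((Bbar t)ᵀ * gf (W t)) ^ 2 + frob (gf (W t) * (Abar t)ᵀ) ^ 2)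
      ≤ (f (W 0) - fstar) / (T * η)
        + (3 * L * η ^ 2 + 2) / (2 * T * η)
            * ∑ t ∈ Finset.range T, frob (E (t + 1)) ^ 2 / η ^ 2
        + η * (GW ^ 2 + GW * (Real.sqrt τ * GW) * (Real.sqrt τ * GW)
            + 2 * L * τ * (Real.sqrt τ * GW + Real.sqrt τ * GW) ^ 2)
        + 2 * η ^ 3 * L * (Real.sqrt τ * GW) ^ 2 * (Real.sqrt τ * GW) ^ 2 := by
  have hstep : ∀ t < T, η * (frob ((Bbar t)ᵀ * gf (W t)) ^ 2 + frob (gf (W t) * (Abar t)ᵀ) ^ 2)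
      ≤ f (W t) - f (W (t + 1)) + (η ^ 2 * (GW ^ 2 / 2 + GW * (√τ * GW) ^ 2
          + 3 * L / 2 * (2 * √τ ^ 2 * GW) ^ 2 + 3 * L / 2 * η ^ 2 * ((√τ * GW) ^ 2) ^ 2)
        + (1 / (2 * η ^ 2) + 3 * L / 2) * frob (E (t + 1)) ^ 2) := fun t ht => by
    rw [← add_assoc]
    refine factorwise_descent_step hN hsmooth hL hη (hgf _) (fun i => hgradi i _)
      (hBnorm t ht.le) (hAnorm t ht.le) ?_
    rw [hE, hW (t + 1), hW t]
    abel
  refine (inf'_range_le_of_descent hT hη hstep (hfstar _)).trans ?_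
  rw [sum_add_distrib, sum_const, card_range, nsmul_eq_mul, ← mul_sum, add_div _ _ (_ * η),
    ← sum_div]
  have hP : 0 ≤ ∑ t ∈ range T, frob (E (t + 1)) ^ 2 := sum_nonneg fun t _ => sq_nonneg _
  linarith [fedlora_constant_le (Nat.cast_pos.mpr hT) hη hL hP (GW := GW) (τ := τ)]

/-- Convergence of federated LoRA with factor-wise averaging, deterministic
version with explicit constants: with per-client factor gradients, factor-wise averaged
updates, aggregation errors `E^{t+1}`, bounded factors `‖B̄^t‖,‖Ā^t‖ ≤ √τ`, bounded client
gradients `‖∇f_i‖ ≤ G_W`, `G_A = G_B = √τ G_W`, and an `L`-smooth average objective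
`f = (1/N)∑ f_i ≥ f*`, the minimum over `t < T` of
`‖∇_A f(W^t)‖² + ‖∇_B f(W^t)‖²` is bounded by
`(f(W⁰)−f*)/(Tη) + ((3Lη²+2)/(2Tη)) ∑_t ‖E^{t+1}‖²/η²
  + η(G_W² + G_W G_A G_B + 2Lτ(G_A+G_B)²) + 2η³ L G_A² G_B²`. -/
theorem fedlora_factorwise_convergence (N T d r : ℕ) (hN : 0 < N) (hT : 0 < T)
    (η : ℝ) (hη : 0 < η)
    (f : Matrix (Fin d) (Fin d) ℝ → ℝ)
    (fi : Fin N → Matrix (Fin d) (Fin d) ℝ → ℝ)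
    (g : Fin N → Matrix (Fin d) (Fin d) ℝ → Matrix (Fin d) (Fin d) ℝ)
    (gf : Matrix (Fin d) (Fin d) ℝ → Matrix (Fin d) (Fin d) ℝ)
    (L GW τ fstar : ℝ) (hL : 0 ≤ L)
    (hf : ∀ X, f X = (N : ℝ)⁻¹ * ∑ i, fi i X)
    (hgf : ∀ X, gf X = (N : ℝ)⁻¹ • ∑ i, g i X)
    (hgradi : ∀ i X, frob (g i X) ≤ GW)
    (hsmooth : ∀ X Y, f Y ≤ f X + frobInner (gf X) (Y - X) + L / 2 * frob (Y - X) ^ 2)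
    (hfstar : ∀ X, fstar ≤ f X)
    (W₀ : Matrix (Fin d) (Fin d) ℝ)
    (Bbar : ℕ → Matrix (Fin d) (Fin r) ℝ) (Abar : ℕ → Matrix (Fin r) (Fin d) ℝ)
    (W : ℕ → Matrix (Fin d) (Fin d) ℝ) (E : ℕ → Matrix (Fin d) (Fin d) ℝ)
    (hW : ∀ t, W t = W₀ + Bbar t * Abar t)
    (hAupd : ∀ t, Abar (t + 1)
      = Abar t - η • ((N : ℝ)⁻¹ • ∑ i, (Bbar t)ᵀ * g i (W t)))
    (hBupd : ∀ t, Bbar (t + 1)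
      = Bbar t - η • ((N : ℝ)⁻¹ • ∑ i, g i (W t) * (Abar t)ᵀ))
    (hE : ∀ t, E (t + 1) = Bbar (t + 1) * Abar (t + 1)
      - (N : ℝ)⁻¹ • ∑ i,
          (Bbar t - η • (g i (W t) * (Abar t)ᵀ)) * (Abar t - η • ((Bbar t)ᵀ * g i (W t))))
    (hBnorm : ∀ t ≤ T, frob (Bbar t) ≤ Real.sqrt τ)
    (hAnorm : ∀ t ≤ T, frob (Abar t) ≤ Real.sqrt τ) :
    (Finset.range T).inf' (Finset.nonempty_range_iff.mpr hT.ne')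
        (fun t => frob ((Bbar t)ᵀ * gf (W t)) ^ 2 + frob (gf (W t) * (Abar t)ᵀ) ^ 2)
      ≤ (f (W 0) - fstar) / (T * η)
        + (3 * L * η ^ 2 + 2) / (2 * T * η)
            * ∑ t ∈ Finset.range T, frob (E (t + 1)) ^ 2 / η ^ 2
        + η * (GW ^ 2 + GW * (Real.sqrt τ * GW) * (Real.sqrt τ * GW)
            + 2 * L * τ * (Real.sqrt τ * GW + Real.sqrt τ * GW) ^ 2)
        + 2 * η ^ 3 * L * (Real.sqrt τ * GW) ^ 2 * (Real.sqrt τ * GW) ^ 2 :=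
  fedlora_factorwise_convergence_general N T d r hN hT η hη f g gf L GW τ fstar hL hgf hgradi
    hsmooth hfstar W₀ Bbar Abar W E hW hE hBnorm hAnorm
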